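/- arXiv:2404.04549 — 3 statements merged into one kernel-verified Lean document; each statement's English description precedes it below -/
import Mathlib

section
/- Let d_0 ∈ ℕ and ε > 0, and let Ω ⊂ ℝ^{d_0} be a compact domain. Then for every continuous function f ∈ C(Ω) there exists an affine SNN Ψ^f such that sup_{x∈Ω} |f(x) − R(Ψ^f)(x)| ≤ ε. In other words, realizations of affine SNNs are universal approximators of continuous functions on compact domains. -/
open scoped BigOperators

noncomputable section

/-- The ReLU function. -/
def relu (t : ℝ) : ℝ := max t 0

/-- A network graph: a finite directed acyclic graph without isolated nodes. -/
structure NetworkGraph (V : Type) [Fintype V] [DecidableEq V] where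
  E : Finset (V × V)
  acyclic : WellFounded (fun u v : V => (u, v) ∈ E)
  noIsolated : ∀ v : V, (∃ u, (u, v) ∈ E) ∨ (∃ u, (v, u) ∈ E)

variable {V : Type} [Fintype V] [DecidableEq V]

/-- Input nodes: nodes with no incoming edges. -/
def NetworkGraph.Vin (G : NetworkGraph V) : Set V := {v | ∀ u, (u, v) ∉ G.E}

/-- Output nodes: nodes with no outgoing edges. -/
def NetworkGraph.Vout (G : NetworkGraph V) : Set V := {v | ∀ u, (v, u) ∉ G.E}

/-- There exists a directed path with `n` edges in `G`. -/
def NetworkGraph.HasPathLen (G : NetworkGraph V) (n : ℕ) : Prop :=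
  ∃ p : Fin (n + 1) → V, ∀ i : Fin n, (p i.castSucc, p i.succ) ∈ G.E

/-- The graph depth (length of the longest directed path) of `G` equals `L`. -/
def NetworkGraph.DepthEq (G : NetworkGraph V) (L : ℕ) : Prop :=
  G.HasPathLen L ∧ ∀ n : ℕ, G.HasPathLen n → n ≤ L

/-- The potential of node `v` at time `s`, given presynaptic spike times `t`,
weights `w` and delays `d`. -/
def potential (G : NetworkGraph V) (w d : V × V → ℝ) (t : V → ℝ) (v : V) (s : ℝ) : ℝ :=
  ∑ u ∈ Finset.univ.filter (fun u => (u, v) ∈ G.E), w (u, v) * relu (s - t u - d (u, v))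

/-- `t` is a consistent assignment of spike times extending the input spike times `tin`:
on input nodes it agrees with `tin`, and at every non-input node `v` the spike time `t v`
is the minimum (which exists) of the set of times at which the potential reaches `1`. -/
def IsSpikeMap (G : NetworkGraph V) (w d : V × V → ℝ) (tin : V → ℝ) (t : V → ℝ) : Prop :=
  (∀ v ∈ G.Vin, t v = tin v) ∧
  ∀ v : V, v ∉ G.Vin → IsLeast {s : ℝ | potential G w d t v s = 1} (t v)

open Classical in
/-- The spike-time assignment determined by the input spike times `tin` (via choice). -/
def spikeMap (G : NetworkGraph V) (w d : V × V → ℝ) (tin : V → ℝ) : V → ℝ :=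
  if h : ∃ t, IsSpikeMap G w d tin t then h.choose else fun _ => 0

/-- Realization of a (positive) SNN, given enumerations of input and output nodes. -/
def snnReal (G : NetworkGraph V) (w d : V × V → ℝ) {din dout : ℕ}
    (ein : Fin din → V) (eout : Fin dout → V) (x : Fin din → ℝ) : Fin dout → ℝ :=
  fun j => spikeMap G w d (Function.extend ein x (fun _ => 0)) (eout j)

/-- Frobenius norm of a real matrix. -/
def frobNorm {m n : ℕ} (A : Matrix (Fin m) (Fin n) ℝ) : ℝ :=
  Real.sqrt (∑ i, ∑ j, (A i j) ^ 2)

/-- Realization of an affine SNN: affine encoder, positive SNN, affine decoder. -/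
def affineReal (G : NetworkGraph V) (w d : V × V → ℝ) {din dout d0 d1 : ℕ}
    (ein : Fin din → V) (eout : Fin dout → V)
    (Win : Matrix (Fin din) (Fin d0) ℝ) (bin : Fin din → ℝ)
    (Wout : Matrix (Fin d1) (Fin dout) ℝ) (bout : Fin d1 → ℝ)
    (x : Fin d0 → ℝ) : Fin d1 → ℝ :=
  Wout.mulVec (snnReal G w d ein eout (Win.mulVec x + bin)) + bout

/-- ℓ∞ distance of the parameters (weights and delays) of two SNNs on the same graph. -/
def paramDist (G : NetworkGraph V) (w d w' d' : V × V → ℝ) : ℝ :=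
  sSup ((fun e => max |w e - w' e| |d e - d' e|) '' (G.E : Set (V × V)))

/-- An affine spiking neural network with input dimension `d0` and output dimension `d1`:
a positive SNN together with enumerations of its input/output nodes and an affine
encoder/decoder pair. -/
structure AffSNN (d0 d1 : ℕ) where
  n : ℕ
  din : ℕ
  dout : ℕ
  G : NetworkGraph (Fin n)
  w : Fin n × Fin n → ℝ
  dl : Fin n × Fin n → ℝ
  ein : Fin din → Fin n
  eout : Fin dout → Fin n
  Win : Matrix (Fin din) (Fin d0) ℝ
  bin : Fin din → ℝ
  Wout : Matrix (Fin d1) (Fin dout) ℝ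
  bout : Fin d1 → ℝ
  w_pos : ∀ e ∈ G.E, 0 < w e
  dl_nonneg : ∀ e ∈ G.E, 0 ≤ dl e
  ein_inj : Function.Injective ein
  ein_range : Set.range ein = G.Vin
  eout_inj : Function.Injective eout
  eout_range : Set.range eout = G.Vout

/-- Realization of an affine SNN. -/
def AffSNN.real {d0 d1 : ℕ} (Ψ : AffSNN d0 d1) : (Fin d0 → ℝ) → Fin d1 → ℝ :=
  affineReal Ψ.G Ψ.w Ψ.dl Ψ.ein Ψ.eout Ψ.Win Ψ.bin Ψ.Wout Ψ.bout

/-- Size of an affine SNN: the number of nonzero scalar entries of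
`(W, D, W_in, W_out, b_in, b_out)`. -/
def AffSNN.size {d0 d1 : ℕ} (Ψ : AffSNN d0 d1) : ℕ :=
  {e | e ∈ Ψ.G.E ∧ Ψ.w e ≠ 0}.ncard + {e | e ∈ Ψ.G.E ∧ Ψ.dl e ≠ 0}.ncard
    + {p : Fin Ψ.din × Fin d0 | Ψ.Win p.1 p.2 ≠ 0}.ncard
    + {p : Fin d1 × Fin Ψ.dout | Ψ.Wout p.1 p.2 ≠ 0}.ncard
    + {i : Fin Ψ.din | Ψ.bin i ≠ 0}.ncard + {i : Fin d1 | Ψ.bout i ≠ 0}.ncard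

/-- All scalar weights of the affine SNN are bounded above in absolute value by `C`. -/
def AffSNN.weightsBddAbove {d0 d1 : ℕ} (Ψ : AffSNN d0 d1) (C : ℝ) : Prop :=
  (∀ e ∈ Ψ.G.E, |Ψ.w e| ≤ C) ∧ (∀ e ∈ Ψ.G.E, |Ψ.dl e| ≤ C) ∧
  (∀ i j, |Ψ.Win i j| ≤ C) ∧ (∀ i, |Ψ.bin i| ≤ C) ∧
  (∀ i j, |Ψ.Wout i j| ≤ C) ∧ (∀ i, |Ψ.bout i| ≤ C)

/-- All synaptic weights of the affine SNN are bounded below by `c`. -/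
def AffSNN.synBddBelow {d0 d1 : ℕ} (Ψ : AffSNN d0 d1) (c : ℝ) : Prop :=
  ∀ e ∈ Ψ.G.E, c ≤ Ψ.w e

/-- Clipping to the interval `[0,1]`. -/
def clip01 (y : ℝ) : ℝ := max 0 (min 1 y)

/-- The hypothesis class of `[0,1]`-clipped realizations of affine SNNs on a fixed
network graph with parameters bounded as in `P*_SNN(G, d⃗; b, B)` (with `d1 = 1`). -/
def clippedClass (G : NetworkGraph V) {din dout : ℕ} (ein : Fin din → V) (eout : Fin dout → V)
    (b B : ℝ) (d0 : ℕ) : Set ((Fin d0 → ℝ) → ℝ) :=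
  { f | ∃ (Win : Matrix (Fin din) (Fin d0) ℝ) (bin : Fin din → ℝ)
        (w dl : V × V → ℝ) (Wout : Matrix (Fin 1) (Fin dout) ℝ) (bout : Fin 1 → ℝ),
      (∀ i j, Win i j ∈ Set.Icc (-B) B) ∧ (∀ i, bin i ∈ Set.Icc (-B) B) ∧
      (∀ e ∈ G.E, w e ∈ Set.Icc b B) ∧ (∀ e ∈ G.E, dl e ∈ Set.Icc 0 B) ∧
      (∀ i j, Wout i j ∈ Set.Icc (-B) B) ∧ (∀ i, bout i ∈ Set.Icc (-B) B) ∧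
      f = fun x => clip01 (affineReal G w dl ein eout Win bin Wout bout x 0) }

/-- The Lipschitz constant `L*` from the covering-number estimate. -/
def Lstar (d0 din dout L : ℕ) (b B : ℝ) : ℝ :=
  (dout : ℝ) * (2 * Real.sqrt din * d0 * B + B * L * (1 + 1 / b ^ 2)
    + 2 * B + L * (1 / b + B)) + 1

/-- A regular triangulation of a compact set `Ω ⊆ ℝ^{d0}`, with simplices recorded by
their vertex sets. -/
structure RegTriangulation (d0 : ℕ) (Ω : Set (Fin d0 → ℝ)) where
  nodes : Finset (Fin d0 → ℝ)
  faces : Finset (Finset (Fin d0 → ℝ))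
  nodes_sub : (nodes : Set (Fin d0 → ℝ)) ⊆ Ω
  card_face : ∀ S ∈ faces, S.card = d0 + 1
  indep : ∀ S ∈ faces, AffineIndependent ℝ ((↑) : {x // x ∈ S} → (Fin d0 → ℝ))
  face_nodes : ∀ S ∈ faces,
    (nodes : Set (Fin d0 → ℝ)) ∩ convexHull ℝ (S : Set (Fin d0 → ℝ)) = (S : Set (Fin d0 → ℝ))
  cover : Ω = ⋃ S ∈ faces, convexHull ℝ (S : Set (Fin d0 → ℝ))
  inter : ∀ S ∈ faces, ∀ S' ∈ faces,
    convexHull ℝ (S : Set (Fin d0 → ℝ)) ∩ convexHull ℝ (S' : Set (Fin d0 → ℝ))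
      = convexHull ℝ ((S ∩ S' : Finset (Fin d0 → ℝ)) : Set (Fin d0 → ℝ))

/-- Euclidean distance on `ℝ^{d0}` (realized as `Fin d0 → ℝ`). -/
def eudist {d0 : ℕ} (x y : Fin d0 → ℝ) : ℝ := Real.sqrt (∑ i, (x i - y i) ^ 2)

/-- Minimal mesh size: the minimal distance between two distinct nodes of a simplex. -/
def hmin {d0 : ℕ} {Ω : Set (Fin d0 → ℝ)} (T : RegTriangulation d0 Ω) : ℝ :=
  sInf { r | ∃ S ∈ T.faces, ∃ x ∈ S, ∃ y ∈ S, x ≠ y ∧ r = eudist x y }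

/-- Maximal mesh size: the maximal distance between two nodes of a simplex. -/
def hmax {d0 : ℕ} {Ω : Set (Fin d0 → ℝ)} (T : RegTriangulation d0 Ω) : ℝ :=
  sSup { r | ∃ S ∈ T.faces, ∃ x ∈ S, ∃ y ∈ S, r = eudist x y }

/-- `f` belongs to the linear finite element space `V_T`: it is continuous on `Ω` and
affine on each simplex of `T`. -/
def PiecewiseAffineOn {d0 : ℕ} {Ω : Set (Fin d0 → ℝ)} (T : RegTriangulation d0 Ω)
    (f : (Fin d0 → ℝ) → ℝ) : Prop :=
  ContinuousOn f Ω ∧ ∀ S ∈ T.faces, ∃ (a : Fin d0 → ℝ) (c : ℝ),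
    ∀ x ∈ convexHull ℝ (S : Set (Fin d0 → ℝ)), f x = ∑ i, a i * x i + c

/-- Admissibility of a compact domain: existence of quasi-uniform triangulations. -/
def Admissible (d0 : ℕ) (Ω : Set (Fin d0 → ℝ)) : Prop :=
  ∃ C1 C2 c2 : ℝ, 0 < C1 ∧ 0 < C2 ∧ 0 < c2 ∧
    ∀ N : ℕ, 0 < N → ∃ T : RegTriangulation d0 Ω,
      (T.faces.card : ℝ) ≤ C1 * N ∧
      c2 * (N : ℝ) ^ (-(1 : ℝ) / d0) ≤ hmin T ∧
      hmin T ≤ hmax T ∧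
      hmax T ≤ C2 * (N : ℝ) ^ (-(1 : ℝ) / d0)

/-- The `W^{s,∞}(Ω)` norm (for `C^s` functions): supremum over `Ω` of the norms of the
iterated derivatives of order at most `s`. -/
def sobNorm {d0 : ℕ} (s : ℕ) (Ω : Set (Fin d0 → ℝ)) (f : (Fin d0 → ℝ) → ℝ) : ℝ :=
  sSup { r | ∃ k ≤ s, ∃ x ∈ Ω, r = ‖iteratedFDeriv ℝ k f x‖ }

/-- The `L^∞(Ω)` norm. -/
def supNormOn {d0 : ℕ} (Ω : Set (Fin d0 → ℝ)) (f : (Fin d0 → ℝ) → ℝ) : ℝ :=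
  sSup ((fun x => |f x|) '' Ω)

/-- The Barron class `Γ_K`. -/
def BarronClass (d0 : ℕ) (K : ℝ) (f : (Fin d0 → ℝ) → ℝ) : Prop :=
  MeasureTheory.LocallyIntegrable f MeasureTheory.volume ∧
  ∃ g : (Fin d0 → ℝ) → ℂ, Measurable g ∧
    (∀ x, (f x : ℂ) = ∫ ξ, Complex.exp (Complex.I * ((∑ i, x i * ξ i : ℝ) : ℂ)) * g ξ) ∧
    (∫ ξ, eudist ξ 0 * ‖g ξ‖) ≤ K

end

/-!
An output neuron fed with equal weight `W` and no delay by `K` input neurons fires somewhere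
between the earliest input spike and `W⁻¹` later. With affine encoders and decoders, affine SNNs
therefore approximate every function `x ↦ ∑ j, c j * min r (α j r ⬝ᵥ x + β j r)` uniformly.
By Stone–Weierstrass, a continuous `f` is uniformly close on the compact `Ω` to a linear
combination of exponentials `x ↦ exp (w ⬝ᵥ x)`. Each of these is convex, hence on `Ω` uniformly
close to the maximum of finitely many of its tangent hyperplanes, which is minus a minimum of
affine functions.
-/

open Finset

def UniformlyApproximableOn {α : Type*} (S : Set (α → ℝ)) (s : Set α) (f : α → ℝ) : Prop :=
  ∀ ε > 0, ∃ g ∈ S, ∀ x ∈ s, |f x - g x| ≤ ε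

lemma UniformlyApproximableOn.of_forall_exists {α : Type*} {S : Set (α → ℝ)} {s : Set α}
    {f : α → ℝ} (h : ∀ ε > 0, ∃ g, UniformlyApproximableOn S s g ∧ ∀ x ∈ s, |f x - g x| ≤ ε) :
    UniformlyApproximableOn S s f := by
  intro ε hε
  obtain ⟨g, hg, hfg⟩ := h (ε / 2) (half_pos hε)
  obtain ⟨k, hk, hgk⟩ := hg (ε / 2) (half_pos hε)
  refine ⟨k, hk, fun x hx => ?_⟩
  calc |f x - k x| ≤ |f x - g x| + |g x - k x| := abs_sub_le _ _ _
    _ ≤ ε / 2 + ε / 2 := add_le_add (hfg x hx) (hgk x hx)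
    _ = ε := add_halves ε

lemma abs_sum_mul_sub_sum_mul_le {ι : Type*} (s : Finset ι) (c a b : ι → ℝ) {δ : ℝ}
    (h : ∀ i ∈ s, |a i - b i| ≤ δ) :
    |∑ i ∈ s, c i * a i - ∑ i ∈ s, c i * b i| ≤ (∑ i ∈ s, |c i|) * δ := by
  rw [← sum_sub_distrib, sum_mul]
  refine (abs_sum_le_sum_abs _ _).trans (sum_le_sum fun i hi => ?_)
  rw [← mul_sub, abs_mul]
  exact mul_le_mul_of_nonneg_left (h i hi) (abs_nonneg _)

lemma mul_div_add_one_le {A ε : ℝ} (hA : 0 ≤ A) (hε : 0 < ε) : A * (ε / (A + 1)) ≤ ε := by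
  rw [mul_div_assoc', div_le_iff₀ (by positivity)]
  nlinarith

def snnRealizations (d0 : ℕ) : Set ((Fin d0 → ℝ) → ℝ) :=
  Set.range fun (Ψ : AffSNN d0 1) x => Ψ.real x 0

lemma exists_isLeast_eq_of_continuous {p : ℝ → ℝ} (hp : Continuous p) {a b c : ℝ}
    (ha : ∀ s ≤ a, p s < c) (hb : c ≤ p b) :
    ∃ τ ∈ Set.Icc a b, IsLeast {s | p s = c} τ := by
  have hab : a ≤ b := le_of_not_ge fun hba => (ha b hba).not_ge hb
  obtain ⟨s₀, hs₀, hps₀⟩ := intermediate_value_Icc hab hp.continuousOn ⟨(ha a le_rfl).le, hb⟩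
  have hlower : ∀ s ∈ {s | p s = c}, a < s := fun s hs =>
    lt_of_not_ge fun hsa => (ha s hsa).ne hs
  have hbdd : BddBelow {s | p s = c} := ⟨a, fun s hs => (hlower s hs).le⟩
  have hmem := (isClosed_eq hp continuous_const).csInf_mem ⟨s₀, hps₀⟩ hbdd
  exact ⟨_, ⟨(hlower _ hmem).le, (csInf_le hbdd hps₀).trans hs₀.2⟩,
    hmem, fun s hs => csInf_le hbdd hs⟩

lemma exists_isLeast_sum_relu_eq_one {ι : Type*} [Fintype ι] [Nonempty ι] {W : ℝ} (hW : 0 < W)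
    (b : ι → ℝ) :
    ∃ τ ∈ Set.Icc (univ.inf' univ_nonempty b) (univ.inf' univ_nonempty b + W⁻¹),
      IsLeast {s | ∑ r, W * relu (s - b r) = 1} τ := by
  refine exists_isLeast_eq_of_continuous (by unfold relu; fun_prop) (fun s hs => ?_) ?_
  · rw [sum_eq_zero fun r _ => by
      rw [relu, max_eq_right (by linarith [inf'_le b (mem_univ r)]), mul_zero]]
    exact one_pos
  · obtain ⟨r₀, -, hr₀⟩ := exists_mem_eq_inf' univ_nonempty b
    calc (1 : ℝ) = W * relu (univ.inf' univ_nonempty b + W⁻¹ - b r₀) := by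
          rw [hr₀, add_sub_cancel_left, relu, max_eq_left (inv_pos.mpr hW).le,
            mul_inv_cancel₀ hW.ne']
      _ ≤ _ := single_le_sum (f := fun r => W * relu (_ - b r))
          (fun r _ => mul_nonneg hW.le (le_max_right _ _)) (mem_univ r₀)

namespace BipartiteSNN

variable {m K : ℕ}

abbrev inputNode (p : Fin m × Fin K) : Fin (m * K + m) := Fin.castAdd m (finProdFinEquiv p)

abbrev outputNode (K : ℕ) (j : Fin m) : Fin (m * K + m) := Fin.natAdd (m * K) j

lemma inputNode_injective : Function.Injective (inputNode (m := m) (K := K)) :=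
  (Fin.castAdd_injective _ _).comp finProdFinEquiv.injective

lemma inputNode_ne_outputNode (p : Fin m × Fin K) (j : Fin m) : inputNode p ≠ outputNode K j := by
  intro h
  have := congrArg Fin.val h
  simp only [Fin.val_castAdd, Fin.val_natAdd] at this
  omega

lemma inputNode_or_outputNode (v : Fin (m * K + m)) :
    (∃ p, inputNode p = v) ∨ ∃ j, outputNode K j = v :=
  Fin.addCases
    (fun i => .inl ⟨finProdFinEquiv.symm i, by simp only [inputNode, Equiv.apply_symm_apply]⟩)
    (fun j => .inr ⟨j, rfl⟩) v

def edges (m K : ℕ) : Finset (Fin (m * K + m) × Fin (m * K + m)) :=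
  univ.image fun p : Fin m × Fin K => (inputNode p, outputNode K p.1)

lemma mem_edges {u v : Fin (m * K + m)} :
    (u, v) ∈ edges m K ↔ ∃ p : Fin m × Fin K, inputNode p = u ∧ outputNode K p.1 = v := by
  simp [edges]

def graph (m K : ℕ) [NeZero K] : NetworkGraph (Fin (m * K + m)) where
  E := edges m K
  acyclic := by
    refine Subrelation.wf (fun {u v} huv => ?_) (measure fun v : Fin (m * K + m) => (v : ℕ)).wf
    obtain ⟨p, rfl, rfl⟩ := mem_edges.mp huv
    show (Fin.castAdd m (finProdFinEquiv p) : ℕ) < (Fin.natAdd (m * K) p.1 : ℕ)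
    simp only [Fin.val_castAdd, Fin.val_natAdd]
    omega
  noIsolated v := by
    rcases inputNode_or_outputNode v with ⟨p, rfl⟩ | ⟨j, rfl⟩
    · exact .inr ⟨_, mem_edges.mpr ⟨p, rfl, rfl⟩⟩
    · exact .inl ⟨_, mem_edges.mpr ⟨(j, 0), rfl, rfl⟩⟩

variable [NeZero K]

lemma graph_Vin : (graph m K).Vin = Set.range inputNode := by
  ext v
  simp only [NetworkGraph.Vin, graph, mem_edges, Set.mem_ofPred_eq, Set.mem_range]
  constructor
  · intro hv
    rcases inputNode_or_outputNode v with hp | ⟨j, rfl⟩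
    · exact hp
    · exact absurd ⟨(j, 0), rfl, rfl⟩ (hv _)
  · rintro ⟨p, rfl⟩ u ⟨q, -, hq⟩
    exact inputNode_ne_outputNode p q.1 hq.symm

lemma graph_Vout : (graph m K).Vout = Set.range (outputNode K) := by
  ext v
  simp only [NetworkGraph.Vout, graph, mem_edges, Set.mem_ofPred_eq, Set.mem_range]
  constructor
  · intro hv
    rcases inputNode_or_outputNode v with ⟨p, rfl⟩ | hj
    · exact absurd ⟨p, rfl, rfl⟩ (hv _)
    · exact hj
  · rintro ⟨j, rfl⟩ u ⟨q, hq, -⟩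
    exact inputNode_ne_outputNode q j hq

lemma filter_mem_edges_outputNode (j : Fin m) :
    univ.filter (fun u => (u, outputNode K j) ∈ (graph m K).E)
      = univ.image fun r : Fin K => inputNode (j, r) := by
  ext u
  simp only [graph, mem_filter, mem_univ, true_and, mem_image, mem_edges]
  constructor
  · rintro ⟨⟨j', r⟩, rfl, hj⟩
    obtain rfl := Fin.natAdd_injective _ _ hj
    exact ⟨r, rfl⟩
  · rintro ⟨r, rfl⟩
    exact ⟨(j, r), rfl, rfl⟩

lemma potential_outputNode (W : ℝ) (t : Fin (m * K + m) → ℝ) (j : Fin m) (s : ℝ) :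
    potential (graph m K) (fun _ => W) (fun _ => 0) t (outputNode K j) s
      = ∑ r, W * relu (s - t (inputNode (j, r))) := by
  rw [potential, filter_mem_edges_outputNode, sum_image]
  · simp
  · intro r _ r' _ h
    simpa using inputNode_injective h

lemma inputNode_mem_Vin (p : Fin m × Fin K) : inputNode p ∈ (graph m K).Vin := by
  rw [graph_Vin]
  exact ⟨p, rfl⟩

lemma isLeast_of_isSpikeMap {W : ℝ} {tin t : Fin (m * K + m) → ℝ}
    (ht : IsSpikeMap (graph m K) (fun _ => W) (fun _ => 0) tin t) (j : Fin m) :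
    IsLeast {s | ∑ r, W * relu (s - tin (inputNode (j, r))) = 1} (t (outputNode K j)) := by
  have hout : outputNode K j ∉ (graph m K).Vin := by
    rw [graph_Vin]
    rintro ⟨p, hp⟩
    exact inputNode_ne_outputNode p j hp
  have hin : ∀ r, t (inputNode (j, r)) = tin (inputNode (j, r)) := fun r =>
    ht.1 _ (inputNode_mem_Vin _)
  simpa only [potential_outputNode, hin] using ht.2 _ hout

lemma exists_isSpikeMap {W : ℝ} (hW : 0 < W) (tin : Fin (m * K + m) → ℝ) :
    ∃ t, IsSpikeMap (graph m K) (fun _ => W) (fun _ => 0) tin t := by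
  choose τ _ hτ using fun j : Fin m =>
    exists_isLeast_sum_relu_eq_one hW fun r => tin (inputNode (j, r))
  refine ⟨Fin.addCases (fun i => tin (Fin.castAdd m i)) τ, fun v hv => ?_, fun v hv => ?_⟩
  · rw [graph_Vin] at hv
    obtain ⟨p, rfl⟩ := hv
    exact Fin.addCases_left _
  · rcases inputNode_or_outputNode v with ⟨p, rfl⟩ | ⟨j, rfl⟩
    · exact absurd (inputNode_mem_Vin p) hv
    · simp only [potential_outputNode, inputNode, outputNode,
        Fin.addCases_left, Fin.addCases_right]
      exact hτ j

lemma isLeast_spikeMap {W : ℝ} (hW : 0 < W) (tin : Fin (m * K + m) → ℝ) (j : Fin m) :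
    IsLeast {s | ∑ r, W * relu (s - tin (inputNode (j, r))) = 1}
      (spikeMap (graph m K) (fun _ => W) (fun _ => 0) tin (outputNode K j)) := by
  have hex := exists_isSpikeMap hW tin
  rw [spikeMap, dif_pos hex]
  exact isLeast_of_isSpikeMap hex.choose_spec j

def affSNN (d0 : ℕ) {W : ℝ} (hW : 0 < W) (α : Fin m → Fin K → Fin d0 → ℝ)
    (β : Fin m → Fin K → ℝ) (c : Fin m → ℝ) : AffSNN d0 1 where
  n := m * K + m
  din := m * K
  dout := m
  G := graph m K
  w _ := W
  dl _ := 0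
  ein := Fin.castAdd m
  eout := outputNode K
  Win i := α (finProdFinEquiv.symm i).1 (finProdFinEquiv.symm i).2
  bin i := β (finProdFinEquiv.symm i).1 (finProdFinEquiv.symm i).2
  Wout _ := c
  bout := 0
  w_pos _ _ := hW
  dl_nonneg _ _ := le_rfl
  ein_inj := Fin.castAdd_injective _ _
  ein_range := by rw [graph_Vin, ← finProdFinEquiv.surjective.range_comp]; rfl
  eout_inj := Fin.natAdd_injective _ _
  eout_range := graph_Vout.symm

lemma affSNN_real (d0 : ℕ) {W : ℝ} (hW : 0 < W) (α : Fin m → Fin K → Fin d0 → ℝ)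
    (β : Fin m → Fin K → ℝ) (c : Fin m → ℝ) (x : Fin d0 → ℝ) :
    ∃ τ : Fin m → ℝ, (∀ j, IsLeast {s | ∑ r, W * relu (s - (α j r ⬝ᵥ x + β j r)) = 1} (τ j)) ∧
      (affSNN d0 hW α β c).real x 0 = ∑ j, c j * τ j := by
  set tin : Fin (m * K + m) → ℝ := Function.extend (Fin.castAdd m)
    (fun i => α (finProdFinEquiv.symm i).1 (finProdFinEquiv.symm i).2 ⬝ᵥ x
      + β (finProdFinEquiv.symm i).1 (finProdFinEquiv.symm i).2) fun _ => 0
  have htin : ∀ j r, tin (inputNode (j, r)) = α j r ⬝ᵥ x + β j r := fun j r => by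
    simp only [tin, inputNode, (Fin.castAdd_injective _ _).extend_apply, Equiv.symm_apply_apply]
  refine ⟨fun j => spikeMap (graph m K) (fun _ => W) (fun _ => 0) tin (outputNode K j),
    fun j => ?_, ?_⟩
  · simpa only [htin] using isLeast_spikeMap hW tin j
  · simp only [AffSNN.real, affineReal, affSNN, Pi.add_apply, Pi.zero_apply, add_zero]
    rfl

end BipartiteSNN

theorem uniformlyApproximableOn_sum_mul_inf'_dotProduct_add {d0 m K : ℕ} [NeZero K]
    (s : Set (Fin d0 → ℝ)) (c : Fin m → ℝ) (α : Fin m → Fin K → Fin d0 → ℝ)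
    (β : Fin m → Fin K → ℝ) :
    UniformlyApproximableOn (snnRealizations d0) s
      fun x => ∑ j, c j * univ.inf' univ_nonempty fun r => α j r ⬝ᵥ x + β j r := by
  intro ε hε
  have hC : 0 ≤ ∑ j, |c j| := sum_nonneg fun j _ => abs_nonneg _
  have hW : 0 < ((∑ j, |c j|) + 1) / ε := by positivity
  refine ⟨_, ⟨BipartiteSNN.affSNN d0 hW α β c, rfl⟩, fun x _ => ?_⟩
  obtain ⟨τ, hτ, hreal⟩ := BipartiteSNN.affSNN_real d0 hW α β c x
  dsimp only
  rw [hreal, abs_sub_comm]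
  refine (abs_sum_mul_sub_sum_mul_le _ c _ _ (δ := ε / ((∑ j, |c j|) + 1)) fun j _ => ?_).trans
    (mul_div_add_one_le hC hε)
  obtain ⟨τ', hτ', hτ'least⟩ := exists_isLeast_sum_relu_eq_one hW fun r => α j r ⬝ᵥ x + β j r
  rw [(hτ j).unique hτ'least, abs_le]
  rw [inv_div] at hτ'
  constructor <;> linarith [hτ'.1, hτ'.2]

lemma exp_mul_one_add_sub_le_exp (a b : ℝ) : Real.exp a * (1 + (b - a)) ≤ Real.exp b :=
  calc Real.exp a * (1 + (b - a)) ≤ Real.exp a * Real.exp (b - a) :=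
        mul_le_mul_of_nonneg_left (by linarith [Real.add_one_le_exp (b - a)]) (Real.exp_pos a).le
    _ = Real.exp b := by rw [← Real.exp_add, add_sub_cancel]

lemma IsCompact.exists_finset_forall_exists_sub_lt {X κ : Type*} [TopologicalSpace X] [Finite κ]
    {s : Set X} (hs : IsCompact s) {g : κ → X → ℝ} {ℓ : κ → X → X → ℝ}
    (hg : ∀ i, Continuous (g i)) (hℓ : ∀ i y, Continuous (ℓ i y)) (hdiag : ∀ i y, ℓ i y y = g i y)
    {ε : ℝ} (hε : 0 < ε) :
    ∃ t : Finset X, ∀ x ∈ s, ∀ i, ∃ y ∈ t, g i x - ℓ i y x < ε := by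
  obtain ⟨t, ht⟩ := hs.elim_finite_subcover (fun y => ⋂ i, {x | g i x - ℓ i y x < ε})
    (fun y => isOpen_iInter_of_finite fun i => isOpen_lt ((hg i).sub (hℓ i y)) continuous_const)
    (fun x _ => Set.mem_iUnion.mpr ⟨x, Set.mem_iInter.mpr fun i => by simpa [hdiag] using hε⟩)
  refine ⟨t, fun x hx i => ?_⟩
  obtain ⟨y, hy, hxy⟩ := Set.mem_iUnion₂.mp (ht hx)
  exact ⟨y, hy, Set.mem_iInter.mp hxy i⟩

section ExpDotProduct

variable {ι : Type*} [Fintype ι]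

noncomputable def expDotProduct (Ω : Set (ι → ℝ)) : Multiplicative (ι → ℝ) →* C(Ω, ℝ) where
  toFun w := ⟨fun x => Real.exp (w.toAdd ⬝ᵥ x), by fun_prop⟩
  map_one' := by ext; simp
  map_mul' v w := by ext; simp [add_dotProduct, Real.exp_add]

lemma separatesPoints_adjoin_mrange_expDotProduct (Ω : Set (ι → ℝ)) :
    (Algebra.adjoin ℝ (MonoidHom.mrange (expDotProduct Ω) : Set C(Ω, ℝ))).SeparatesPoints := by
  intro x y hxy
  obtain ⟨i, hi⟩ := Function.ne_iff.mp (Subtype.coe_injective.ne hxy)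
  classical
  refine ⟨_, ⟨expDotProduct Ω (.ofAdd (Pi.single i 1)), Algebra.subset_adjoin ⟨_, rfl⟩, rfl⟩, ?_⟩
  simpa [expDotProduct, single_dotProduct] using hi

lemma exists_sum_exp_dotProduct_near {Ω : Set (ι → ℝ)} (hΩ : IsCompact Ω) {f : (ι → ℝ) → ℝ}
    (hf : ContinuousOn f Ω) {ε : ℝ} (hε : 0 < ε) :
    ∃ (m : ℕ) (c : Fin m → ℝ) (w : Fin m → ι → ℝ),
      ∀ x ∈ Ω, |f x - ∑ j, c j * Real.exp (w j ⬝ᵥ x)| < ε := by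
  have := isCompact_iff_compactSpace.mp hΩ
  obtain ⟨g, hg⟩ := ContinuousMap.exists_mem_subalgebra_near_continuous_of_separatesPoints _
    (separatesPoints_adjoin_mrange_expDotProduct Ω) _ hf.domRestrict ε hε
  have hspan := g.2
  rw [← Subalgebra.mem_toSubmodule, Algebra.adjoin_eq_span, Submonoid.closure_eq] at hspan
  obtain ⟨m, c, v, hv⟩ := Submodule.mem_span_set'.mp hspan
  choose w hw using fun j => (v j).2
  refine ⟨m, c, fun j => (w j).toAdd, fun x hx => ?_⟩
  have hgx := hg ⟨x, hx⟩
  rw [← hv] at hgx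
  rw [abs_sub_comm]
  simpa [← hw, expDotProduct] using hgx

/-- `-(min of affine functions)` is the maximum of finitely many tangent hyperplanes of the convex
function `x ↦ exp (w j ⬝ᵥ x)`; the tangency points are taken from a finite cover of `Ω`. -/
lemma exists_inf'_dotProduct_add_near_exp {Ω : Set (ι → ℝ)}
    (hΩ : IsCompact Ω) {m : ℕ} (w : Fin m → ι → ℝ) {δ : ℝ} (hδ : 0 < δ) :
    ∃ (K : ℕ) (α : Fin m → Fin (K + 1) → ι → ℝ) (β : Fin m → Fin (K + 1) → ℝ),
      ∀ x ∈ Ω, ∀ j,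
        |Real.exp (w j ⬝ᵥ x) + univ.inf' univ_nonempty fun r => α j r ⬝ᵥ x + β j r| ≤ δ := by
  set tangent : Fin m → (ι → ℝ) → (ι → ℝ) → ℝ :=
    fun j y x => Real.exp (w j ⬝ᵥ y) * (1 + (w j ⬝ᵥ x - w j ⬝ᵥ y))
  obtain ⟨t, ht⟩ := hΩ.exists_finset_forall_exists_sub_lt (g := fun j x => Real.exp (w j ⬝ᵥ x))
    (ℓ := tangent) (fun j => by fun_prop) (fun j y => by fun_prop) (fun j y => by simp [tangent])
    hδ
  set y : Fin (t.card + 1) → ι → ℝ := Fin.cons 0 fun r => t.equivFin.symm r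
  refine ⟨t.card, fun j r => -Real.exp (w j ⬝ᵥ y r) • w j,
    fun j r => -(Real.exp (w j ⬝ᵥ y r) * (1 - w j ⬝ᵥ y r)), fun x hx j => ?_⟩
  have haff : ∀ r, (-Real.exp (w j ⬝ᵥ y r) • w j) ⬝ᵥ x
      + -(Real.exp (w j ⬝ᵥ y r) * (1 - w j ⬝ᵥ y r)) = -tangent j (y r) x := fun r => by
    simp only [smul_dotProduct, smul_eq_mul, tangent]
    ring
  simp only [haff]
  have hlower : -Real.exp (w j ⬝ᵥ x) ≤ univ.inf' univ_nonempty fun r => -tangent j (y r) x :=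
    le_inf' _ _ fun r _ => neg_le_neg (exp_mul_one_add_sub_le_exp _ _)
  obtain ⟨y₀, hy₀, hlt⟩ := ht x hx j
  have hupper := inf'_le (fun r => -tangent j (y r) x) (mem_univ (t.equivFin ⟨y₀, hy₀⟩).succ)
  simp only [y, Fin.cons_succ, Equiv.symm_apply_apply] at hupper
  rw [abs_le]
  constructor <;> linarith

end ExpDotProduct

theorem uniformlyApproximableOn_sum_mul_exp_dotProduct {d0 m : ℕ} {Ω : Set (Fin d0 → ℝ)}
    (hΩ : IsCompact Ω) (c : Fin m → ℝ) (w : Fin m → Fin d0 → ℝ) :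
    UniformlyApproximableOn (snnRealizations d0) Ω fun x => ∑ j, c j * Real.exp (w j ⬝ᵥ x) := by
  refine .of_forall_exists fun ε hε => ?_
  have hC : 0 ≤ ∑ j, |c j| := sum_nonneg fun j _ => abs_nonneg _
  obtain ⟨K, α, β, hαβ⟩ := exists_inf'_dotProduct_add_near_exp hΩ w
    (δ := ε / ((∑ j, |c j|) + 1)) (by positivity)
  refine ⟨_, uniformlyApproximableOn_sum_mul_inf'_dotProduct_add Ω (-c) α β, fun x hx => ?_⟩
  simp only [Pi.neg_apply, neg_mul, ← mul_neg]
  refine (abs_sum_mul_sub_sum_mul_le _ c _ _ fun j _ => ?_).trans (mul_div_add_one_le hC hε)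
  simpa only [sub_neg_eq_add] using hαβ x hx j

theorem uniformlyApproximableOn_snnRealizations {d0 : ℕ} {Ω : Set (Fin d0 → ℝ)}
    (hΩ : IsCompact Ω) {f : (Fin d0 → ℝ) → ℝ} (hf : ContinuousOn f Ω) :
    UniformlyApproximableOn (snnRealizations d0) Ω f :=
  .of_forall_exists fun _ hε => by
    obtain ⟨m, c, w, hcw⟩ := exists_sum_exp_dotProduct_near hΩ hf hε
    exact ⟨_, uniformlyApproximableOn_sum_mul_exp_dotProduct hΩ c w, fun x hx => (hcw x hx).le⟩

theorem statement9_general (d0 : ℕ) (ε : ℝ) (hε : 0 < ε)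
    (Ω : Set (Fin d0 → ℝ)) (hΩ : IsCompact Ω)
    (f : (Fin d0 → ℝ) → ℝ) (hf : ContinuousOn f Ω) :
    ∃ Ψ : AffSNN d0 1, ∀ x ∈ Ω, |f x - Ψ.real x 0| ≤ ε := by
  obtain ⟨_, ⟨Ψ, rfl⟩, hΨ⟩ := uniformlyApproximableOn_snnRealizations hΩ hf ε hε
  exact ⟨Ψ, hΨ⟩

/-- Theorem: universality. For every compact `Ω ⊆ ℝ^{d0}`, every
continuous `f : Ω → ℝ` and every `ε > 0` there is an affine SNN `Ψ` with
`sup_{x ∈ Ω} |f(x) − R(Ψ)(x)| ≤ ε`. -/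
theorem statement9 (d0 : ℕ) (hd0 : 0 < d0) (ε : ℝ) (hε : 0 < ε)
    (Ω : Set (Fin d0 → ℝ)) (hΩ : IsCompact Ω)
    (f : (Fin d0 → ℝ) → ℝ) (hf : ContinuousOn f Ω) :
    ∃ Ψ : AffSNN d0 1, ∀ x ∈ Ω, |f x - Ψ.real x 0| ≤ ε :=
  statement9_general d0 ε hε Ω hΩ f hf
end

section
/- Let N ∈ ℕ, let w_1, …, w_N > 0 and d_1, …, d_N ≥ 0. For a tuple of arrival times s = (s_1,…,s_N) ∈ ℝ^N, let T(s) denote the unique t ∈ ℝ with Σ_{i=1}^N w_i · ρ(t − s_i − d_i) = 1, where ρ(t)=max{t,0}. Then for all s, s̃ ∈ ℝ^N: |T(s) − T(s̃)| ≤ ‖s − s̃‖_{ℓ∞}. (That is, the spike time of a spiking neuron with positive weights is 1-Lipschitz in the incoming spike times with respect to the ℓ∞ norm.) -/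
open scoped BigOperators

/-!
The potential `P_s(t) = ∑ wᵢ ρ(t - sᵢ - dᵢ)` depends on `t` and `s` only through the lags
`t - sᵢ`, and it is strictly increasing in all of them jointly wherever it is positive, since
some term is then active. If `sᵢ ≤ s'ᵢ + ε` for all `i` and `t > t' + ε`, every lag of `(s, t)`
strictly exceeds the corresponding lag of `(s', t')`, so the two potentials cannot both equal
the threshold `1`. Exchanging the roles of `s` and `s'` gives the other inequality.
-/

open Finset

lemma relu_mono : Monotone relu := fun _ _ h => max_le_max_right 0 h

lemma relu_lt_relu {a b : ℝ} (hab : a < b) (hb : 0 < b) : relu a < relu b :=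
  max_lt (hab.trans_le (le_max_left b 0)) (hb.trans_le (le_max_left b 0))

lemma pos_of_relu_pos {a : ℝ} (ha : 0 < relu a) : 0 < a := by
  by_contra! h
  exact ha.ne' (max_eq_right h)

section Potential

variable {ι : Type*} [Fintype ι] (w d : ι → ℝ)

def neuronPotential (s : ι → ℝ) (t : ℝ) : ℝ := ∑ i, w i * relu (t - s i - d i)

variable {w d}

lemma neuronPotential_lt_of_sub_lt (hw : ∀ i, 0 ≤ w i) {s s' : ι → ℝ} {t t' : ℝ}
    (h : ∀ i, t - s i < t' - s' i) (hpos : 0 < neuronPotential w d s' t') :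
    neuronPotential w d s t < neuronPotential w d s' t' := by
  obtain ⟨j, -, hj⟩ : ∃ j ∈ univ, 0 < w j * relu (t' - s' j - d j) := by
    by_contra! hle
    exact hpos.not_ge (sum_nonpos hle)
  have hrelu : 0 < relu (t' - s' j - d j) := pos_of_mul_pos_right hj (hw j)
  have hwj : 0 < w j := pos_of_mul_pos_left hj hrelu.le
  refine sum_lt_sum (fun i _ => mul_le_mul_of_nonneg_left (relu_mono ?_) (hw i))
    ⟨j, mem_univ j, ?_⟩
  · linarith [h i]
  · exact mul_lt_mul_of_pos_left (relu_lt_relu (by linarith [h j]) (pos_of_relu_pos hrelu)) hwj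

lemma le_add_of_neuronPotential_eq_one (hw : ∀ i, 0 ≤ w i) {s s' : ι → ℝ} {t t' ε : ℝ}
    (hs : ∀ i, s i ≤ s' i + ε) (ht : neuronPotential w d s t = 1)
    (ht' : neuronPotential w d s' t' = 1) : t ≤ t' + ε := by
  by_contra! hlt
  have : neuronPotential w d s' t' < neuronPotential w d s t :=
    neuronPotential_lt_of_sub_lt hw (fun i => by linarith [hs i]) (by rw [ht]; exact one_pos)
  linarith

end Potential

theorem statement14_general (N : ℕ) (w d : Fin N → ℝ)
    (hw : ∀ i, 0 < w i)
    (s s' : Fin N → ℝ) (t t' : ℝ)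
    (ht : ∑ i, w i * relu (t - s i - d i) = 1)
    (ht' : ∑ i, w i * relu (t' - s' i - d i) = 1) :
    |t - t'| ≤ ‖s - s'‖ := by
  have hw₀ : ∀ i, 0 ≤ w i := fun i => (hw i).le
  have hs : ∀ i, |s i - s' i| ≤ ‖s - s'‖ := fun i => norm_le_pi_norm (s - s') i
  have h₁ := le_add_of_neuronPotential_eq_one (ε := ‖s - s'‖) hw₀
    (fun i => by linarith [(abs_le.mp (hs i)).2]) ht ht'
  have h₂ := le_add_of_neuronPotential_eq_one (ε := ‖s - s'‖) hw₀
    (fun i => by linarith [(abs_le.mp (hs i)).1]) ht' ht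
  rw [abs_sub_le_iff]
  constructor <;> linarith

/-- Lemma: the spike time of a positive-weight neuron is 1-Lipschitz
in the incoming spike times, w.r.t. the ℓ∞ norm. If `t` and `t'` are the (unique)
solutions of `Σ w_i ρ(t − s_i − d_i) = 1` for arrival times `s` and `s'`, then
`|t − t'| ≤ ‖s − s'‖_∞`. -/
theorem statement14 (N : ℕ) (w d : Fin N → ℝ)
    (hw : ∀ i, 0 < w i) (hd : ∀ i, 0 ≤ d i)
    (s s' : Fin N → ℝ) (t t' : ℝ)
    (ht : ∑ i, w i * relu (t - s i - d i) = 1)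
    (ht' : ∑ i, w i * relu (t' - s' i - d i) = 1) :
    |t - t'| ≤ ‖s - s'‖ :=
  statement14_general N w d hw s s' t t' ht ht'
end

section
/- Let Φ = (G,W,D) be a positive SNN, and let b, B ∈ (0,∞) be such that w_{(u,v)} ≥ b and d_{(u,v)} ≤ B for all edges (u,v) ∈ E. Let L be the graph depth of G. Then the output of Φ on the all-zero input spike times satisfies ‖R(Φ)(0⃗)‖_{ℓ∞} ≤ L · (1/b + B). -/
open scoped BigOperators

theorem IsLeast.le_of_continuous_crossing {f : ℝ → ℝ} {c x s₀ s₁ : ℝ} (hf : Continuous f)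
    (hx : IsLeast {s | f s = c} x) (hs : s₀ ≤ s₁) (h₀ : f s₀ ≤ c) (h₁ : c ≤ f s₁) : x ≤ s₁ := by
  obtain ⟨s, hs_mem, hs_eq⟩ := intermediate_value_Icc hs hf.continuousOn ⟨h₀, h₁⟩
  exact (hx.2 hs_eq).trans hs_mem.2

namespace NetworkGraph

variable {V : Type} [Fintype V] [DecidableEq V] (G : NetworkGraph V)

def HasPathEndingAt (n : ℕ) (v : V) : Prop :=
  ∃ p : Fin (n + 1) → V, (∀ i : Fin n, (p i.castSucc, p i.succ) ∈ G.E) ∧ p (Fin.last n) = v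

variable {G}

theorem hasPathEndingAt_zero (v : V) : G.HasPathEndingAt 0 v :=
  ⟨fun _ => v, fun i => i.elim0, rfl⟩

theorem HasPathEndingAt.snoc {n : ℕ} {u v : V} (h : G.HasPathEndingAt n u) (huv : (u, v) ∈ G.E) :
    G.HasPathEndingAt (n + 1) v := by
  obtain ⟨p, hp, rfl⟩ := h
  refine ⟨Fin.snoc p v, fun i => ?_, Fin.snoc_last ..⟩
  induction i using Fin.lastCases with
  | last => rwa [Fin.succ_last, Fin.snoc_castSucc, Fin.snoc_last]
  | cast i => rw [Fin.succ_castSucc, Fin.snoc_castSucc, Fin.snoc_castSucc]; exact hp i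

theorem HasPathEndingAt.hasPathLen {n : ℕ} {v : V} (h : G.HasPathEndingAt n v) :
    G.HasPathLen n :=
  ⟨h.choose, h.choose_spec.1⟩

end NetworkGraph

section SpikeTimes

variable {V : Type} [Fintype V] [DecidableEq V] {G : NetworkGraph V} {w d : V × V → ℝ}
  {t : V → ℝ} {v : V}

theorem continuous_potential : Continuous (potential G w d t v) := by
  unfold potential relu
  fun_prop

theorem potential_eq_zero_of_le_arrival {s : ℝ}
    (hs : ∀ u, (u, v) ∈ G.E → s ≤ t u + d (u, v)) : potential G w d t v s = 0 := by
  refine Finset.sum_eq_zero fun u hu => ?_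
  have hle : s - t u - d (u, v) ≤ 0 := by
    linarith [hs u (Finset.mem_filter.1 hu).2]
  simp [relu, max_eq_right hle]

theorem le_potential_of_edge {u : V} {s : ℝ} (hw : ∀ u, (u, v) ∈ G.E → 0 ≤ w (u, v))
    (hu : (u, v) ∈ G.E) :
    w (u, v) * (s - t u - d (u, v)) ≤ potential G w d t v s := by
  calc w (u, v) * (s - t u - d (u, v)) ≤ w (u, v) * relu (s - t u - d (u, v)) :=
        mul_le_mul_of_nonneg_left (le_max_left _ _) (hw u hu)
    _ ≤ potential G w d t v s :=
        Finset.single_le_sum (f := fun u => w (u, v) * relu (s - t u - d (u, v)))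
          (fun u' hu' => mul_nonneg (hw u' (Finset.mem_filter.1 hu').2) (le_max_right _ _))
          (Finset.mem_filter.2 ⟨Finset.mem_univ u, hu⟩)

theorem isSpikeMap_spikeMap {tin : V → ℝ} (h : ∃ t, IsSpikeMap G w d tin t) :
    IsSpikeMap G w d tin (spikeMap G w d tin) := by
  rw [spikeMap, dif_pos h]
  exact h.choose_spec

theorem spikeMap_of_not_exists {tin : V → ℝ} (h : ¬∃ t, IsSpikeMap G w d tin t) :
    spikeMap G w d tin = 0 := by
  rw [spikeMap, dif_neg h]
  rfl

/-- A non-input node fires within `1 / b + B` of the spike of any presynaptic neighbour, since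
that synapse alone (weight `≥ b`) lifts the potential to `1` within time `1 / b` of its arrival;
iterating along the acyclic graph bounds the spike time by the length of a path. -/
theorem IsSpikeMap.bound_of_inputs_mem_Icc {tin : V → ℝ} {b B T : ℝ}
    (ht : IsSpikeMap G w d tin t) (hb : 0 < b) (hw : ∀ e ∈ G.E, b ≤ w e)
    (hdnn : ∀ e ∈ G.E, 0 ≤ d e) (hdB : ∀ e ∈ G.E, d e ≤ B)
    (htin : ∀ v ∈ G.Vin, tin v ∈ Set.Icc 0 T) (v : V) :
    0 ≤ t v ∧ ∃ n : ℕ, G.HasPathEndingAt n v ∧ t v ≤ T + n * (1 / b + B) := by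
  induction v using WellFounded.induction G.acyclic with
  | _ v ih =>
  by_cases hv : v ∈ G.Vin
  · obtain ⟨h0, hT⟩ := htin v hv
    rw [ht.1 v hv]
    exact ⟨h0, 0, NetworkGraph.hasPathEndingAt_zero v, by simpa using hT⟩
  obtain ⟨u, hu⟩ : ∃ u, (u, v) ∈ G.E := by simpa [NetworkGraph.Vin] using hv
  have hw0 : ∀ u, (u, v) ∈ G.E → 0 ≤ w (u, v) := fun u hu => hb.le.trans (hw _ hu)
  have harrival : ∀ u, (u, v) ∈ G.E → 0 ≤ t u + d (u, v) :=
    fun u hu => add_nonneg (ih u hu).1 (hdnn _ hu)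
  have hnonneg : 0 ≤ t v := by
    by_contra! hneg
    have hfire : potential G w d t v (t v) = 1 := (ht.2 v hv).1
    rw [potential_eq_zero_of_le_arrival fun u hu => hneg.le.trans (harrival u hu)] at hfire
    exact zero_ne_one hfire
  have hcross : 1 ≤ potential G w d t v (t u + d (u, v) + 1 / b) := by
    refine le_trans ?_ (le_potential_of_edge hw0 hu)
    calc (1 : ℝ) = b * (1 / b) := (mul_one_div_cancel hb.ne').symm
      _ ≤ w (u, v) * (1 / b) := by gcongr; exact hw _ hu
      _ = w (u, v) * (t u + d (u, v) + 1 / b - t u - d (u, v)) := by ring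
  have hfirst : t v ≤ t u + d (u, v) + 1 / b :=
    (ht.2 v hv).le_of_continuous_crossing (s₀ := 0) continuous_potential
      (by linarith [harrival u hu, one_div_pos.2 hb])
      (by rw [potential_eq_zero_of_le_arrival harrival]; norm_num) hcross
  obtain ⟨-, n, hpath, hn⟩ := ih u hu
  refine ⟨hnonneg, n + 1, hpath.snoc hu, ?_⟩
  push_cast
  linarith [hdB _ hu]

end SpikeTimes

theorem statement18_general {V : Type} [Fintype V] [DecidableEq V]
    (G : NetworkGraph V) {din dout : ℕ}
    (ein : Fin din → V) (eout : Fin dout → V)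
    (w d : V × V → ℝ) (b B : ℝ) (hb : 0 < b) (hB : 0 < B)
    (hw : ∀ e ∈ G.E, b ≤ w e)
    (hdnn : ∀ e ∈ G.E, 0 ≤ d e) (hdB : ∀ e ∈ G.E, d e ≤ B)
    (L : ℕ) (hL : G.DepthEq L) :
    ‖snnReal G w d ein eout (0 : Fin din → ℝ)‖ ≤ (L : ℝ) * (1 / b + B) := by
  have hC : (0 : ℝ) ≤ L * (1 / b + B) := by positivity
  rw [pi_norm_le_iff_of_nonneg hC]
  intro j
  set tin : V → ℝ := Function.extend ein 0 fun _ => 0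
  change ‖spikeMap G w d tin (eout j)‖ ≤ _
  by_cases h : ∃ t, IsSpikeMap G w d tin t
  · have htin : ∀ v ∈ G.Vin, tin v ∈ Set.Icc 0 0 := fun v _ => by
      simp [tin, ← Pi.zero_def, Function.extend_zero]
    obtain ⟨hnonneg, n, hpath, hle⟩ :=
      (isSpikeMap_spikeMap h).bound_of_inputs_mem_Icc hb hw hdnn hdB htin (eout j)
    rw [Real.norm_eq_abs, abs_of_nonneg hnonneg]
    calc spikeMap G w d tin (eout j) ≤ 0 + n * (1 / b + B) := hle
      _ ≤ L * (1 / b + B) := by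
        rw [zero_add]
        gcongr
        exact hL.2 n hpath.hasPathLen
  · rwa [spikeMap_of_not_exists h, Pi.zero_apply, norm_zero]

/-- Lemma: magnitude of the output of a positive SNN on zero
inputs. If all synaptic weights are at least `b` and all delays at most `B`, and the
graph depth is `L`, then `‖R(Φ)(0⃗)‖_∞ ≤ L (1/b + B)`. -/
theorem statement18 {V : Type} [Fintype V] [DecidableEq V]
    (G : NetworkGraph V) {din dout : ℕ}
    (ein : Fin din → V) (eout : Fin dout → V)
    (hein : Function.Injective ein) (heinr : Set.range ein = G.Vin)
    (heout : Function.Injective eout) (heoutr : Set.range eout = G.Vout)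
    (w d : V × V → ℝ) (b B : ℝ) (hb : 0 < b) (hB : 0 < B)
    (hw : ∀ e ∈ G.E, b ≤ w e)
    (hdnn : ∀ e ∈ G.E, 0 ≤ d e) (hdB : ∀ e ∈ G.E, d e ≤ B)
    (L : ℕ) (hL : G.DepthEq L) :
    ‖snnReal G w d ein eout (0 : Fin din → ℝ)‖ ≤ (L : ℝ) * (1 / b + B) :=
  statement18_general G ein eout w d b B hb hB hw hdnn hdB L hL
end
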